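/- arXiv:2107.10755 — 2 statements merged into one kernel-verified Lean document; each statement's English description precedes it below -/
import Mathlib

section
/- Fix n ≥ 1 and the origin O ∈ ℝⁿ. If T₁, T₂ ∈ D'(ℝⁿ) are distributions for which there exists an open set ω ⊂ ℝⁿ with O ∈ ω and T₁|_ω = T₂|_ω, then T₁ and T₂ have the same degree of divergence with respect to O: deg(T₁) = deg(T₂) (as elements of ℝ ∪ {±∞}). -/
/-!
Common framework: distributions with point singularities on open subsets of ℝⁿ,
following the paper's setup (test functions, distributions, restriction, scaling
degree and degree of divergence, singular fields, distributional operators).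
-/

set_option linter.unusedVariables false

open MeasureTheory Metric Filter Topology Set
open scoped ContDiff

namespace Paper

/-- Points of `ℝⁿ`. -/
abbrev Pt (n : ℕ) := Fin n → ℝ

/-- A test function for an open set `U ⊆ ℝⁿ`: a compactly supported smooth
function on `ℝⁿ` whose (closed) support lies inside `U`. -/
def IsTestFun {n : ℕ} (U : Set (Pt n)) (f : Pt n → ℝ) : Prop :=
  ContDiff ℝ ∞ f ∧ HasCompactSupport f ∧ tsupport f ⊆ U

theorem isTestFun_zero {n : ℕ} (U : Set (Pt n)) : IsTestFun U (0 : Pt n → ℝ) := by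
  have hts : tsupport (0 : Pt n → ℝ) = ∅ := by
    simp [tsupport, Function.support_zero]
  exact ⟨contDiff_const, by simp [HasCompactSupport, hts], by simp [hts]⟩

/-- The space `D(U)` of test functions, as a submodule of all functions `ℝⁿ → ℝ`. -/
def testSubmodule (n : ℕ) (U : Set (Pt n)) : Submodule ℝ (Pt n → ℝ) where
  carrier := {f | IsTestFun U f}
  add_mem' := fun hf hg =>
    ⟨hf.1.add hg.1, hf.2.1.add hg.2.1,
      (tsupport_add _ _).trans (union_subset hf.2.2 hg.2.2)⟩
  zero_mem' := isTestFun_zero U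
  smul_mem' := fun c f hf =>
    ⟨hf.1.const_smul c, hf.2.1.mono (Function.support_const_smul_subset c f),
      (closure_mono (Function.support_const_smul_subset c f)).trans hf.2.2⟩

abbrev TestFun (n : ℕ) (U : Set (Pt n)) := ↥(testSubmodule n U)

theorem TestFun.isTF {n : ℕ} {U : Set (Pt n)} (φ : TestFun n U) :
    IsTestFun U (φ : Pt n → ℝ) := φ.2

/-- Convergence of a sequence of test functions in `D(U)`: the supports stay inside a
common compact subset of `U` and all iterated derivatives converge uniformly. -/
def TFConv {n : ℕ} {U : Set (Pt n)} (φ : ℕ → TestFun n U) (ψ : TestFun n U) : Prop :=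
  (∃ K : Set (Pt n), IsCompact K ∧ K ⊆ U ∧ ∀ j, tsupport (φ j : Pt n → ℝ) ⊆ K) ∧
  ∀ m : ℕ, TendstoUniformly (fun j x => iteratedFDeriv ℝ m (φ j : Pt n → ℝ) x)
      (fun x => iteratedFDeriv ℝ m (ψ : Pt n → ℝ) x) atTop

/-- A distribution on `U`, i.e. an element of `D'(U)`: a linear functional on `D(U)`
which is (sequentially) continuous for the test-function topology. -/
structure Dist (n : ℕ) (U : Set (Pt n)) where
  toLin : TestFun n U →ₗ[ℝ] ℝ
  cont : ∀ (φ : ℕ → TestFun n U) (ψ : TestFun n U), TFConv φ ψ →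
    Tendsto (fun j => toLin (φ j)) atTop (𝓝 (toLin ψ))

instance {n : ℕ} {U : Set (Pt n)} : Zero (Dist n U) :=
  ⟨{ toLin := 0
     cont := by intro φ ψ _; simp only [LinearMap.zero_apply]; exact tendsto_const_nhds }⟩

/-- The inclusion `D(W) → D(U)` for `W ⊆ U` (extension of test functions by zero). -/
def tfIncl {n : ℕ} {W U : Set (Pt n)} (h : W ⊆ U) : TestFun n W →ₗ[ℝ] TestFun n U where
  toFun φ := ⟨(φ : Pt n → ℝ), φ.isTF.1, φ.isTF.2.1, φ.isTF.2.2.trans h⟩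
  map_add' φ ψ := rfl
  map_smul' c φ := rfl

/-- Restriction `T|_W ∈ D'(W)` of a distribution `T ∈ D'(U)` to a subset `W ⊆ U`. -/
noncomputable def Dist.restrict {n : ℕ} {U : Set (Pt n)} (T : Dist n U) {W : Set (Pt n)}
    (h : W ⊆ U) : Dist n W where
  toLin := T.toLin.comp (tfIncl h)
  cont := fun φ ψ hconv => by
    refine T.cont (fun j => tfIncl h (φ j)) (tfIncl h ψ) ⟨?_, hconv.2⟩
    obtain ⟨K, hK1, hK2, hK3⟩ := hconv.1
    exact ⟨K, hK1, hK2.trans h, hK3⟩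

/-- The partial derivative `∂f/∂xᵢ` of a function on `ℝⁿ`. -/
noncomputable def pderivFun {n : ℕ} (i : Fin n) (f : Pt n → ℝ) : Pt n → ℝ :=
  fun x => fderiv ℝ f x (Pi.single i 1)

theorem isTestFun_pderiv {n : ℕ} {U : Set (Pt n)} (i : Fin n) {f : Pt n → ℝ}
    (hf : IsTestFun U f) : IsTestFun U (pderivFun i f) := by
  have hsupp : Function.support (pderivFun i f) ⊆ tsupport f := by
    intro x hx
    apply support_fderiv_subset (𝕜 := ℝ)
    intro h
    exact hx (by simp [pderivFun, h])
  refine ⟨(hf.1.fderiv_right (by exact_mod_cast le_top)).clm_apply contDiff_const,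
    hf.2.1.mono' hsupp, ?_⟩
  exact (closure_minimal hsupp (isClosed_tsupport f)).trans hf.2.2

/-- The partial derivative `∂φ/∂xᵢ` of a test function. -/
noncomputable def pdT {n : ℕ} {U : Set (Pt n)} (i : Fin n) (φ : TestFun n U) : TestFun n U :=
  ⟨pderivFun i (φ : Pt n → ℝ), isTestFun_pderiv i φ.isTF⟩

/-- The iterated partial derivative `∂^α f` for a multi-index `α ∈ ℕⁿ`. -/
noncomputable def mpdN {n : ℕ} (α : Fin n → ℕ) (f : Pt n → ℝ) : Pt n → ℝ :=
  (List.finRange n).foldr (fun i g => (pderivFun i)^[α i] g) f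

/-- The iterated partial derivative `∂₁^a ∂₂^b f` in two dimensions. -/
noncomputable def mpd2 (a b : ℕ) (f : Pt 2 → ℝ) : Pt 2 → ℝ :=
  (pderivFun (0 : Fin 2))^[a] ((pderivFun (1 : Fin 2))^[b] f)

/-- The rescaled function `φ_λ(x) = λ⁻ⁿ φ(x/λ)`. -/
noncomputable def scaleFun {n : ℕ} (lam : ℝ) (f : Pt n → ℝ) : Pt n → ℝ :=
  fun x => (lam ^ n)⁻¹ * f (lam⁻¹ • x)

/-- `k` belongs to the scaling set of `T` (w.r.t. the origin) if
`λ^k (T|_{B_r})_λ → 0` in the sense of distributions as `λ → 0⁺`, for some ball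
`B_r` around the origin with `B_r ∖ {O} ⊆ U`.  The rescaled test functions are
encoded by an arbitrary family `Φ` with `(Φ λ) = φ_λ` for `λ ∈ (0,1)`. -/
def sdSet {n : ℕ} {U : Set (Pt n)} (T : Dist n U) : Set ℝ :=
  {k | ∃ r > 0, ball (0 : Pt n) r \ {0} ⊆ U ∧
    ∀ φ : TestFun n U, tsupport (φ : Pt n → ℝ) ⊆ ball (0 : Pt n) r →
    ∀ Φ : ℝ → TestFun n U,
      (∀ lam : ℝ, 0 < lam → lam < 1 → ((Φ lam : Pt n → ℝ) = scaleFun lam (φ : Pt n → ℝ))) →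
      Tendsto (fun lam : ℝ => lam ^ k * T.toLin (Φ lam)) (𝓝[>] 0) (𝓝 0)}

/-- The scaling degree of `T` with respect to the origin, as an extended real. -/
noncomputable def sd {n : ℕ} {U : Set (Pt n)} (T : Dist n U) : EReal :=
  sInf {x : EReal | ∃ k ∈ sdSet T, x = (k : EReal)}

/-- The degree of divergence `deg(T) = sd(T) − n` with respect to the origin. -/
noncomputable def degDiv {n : ℕ} {U : Set (Pt n)} (T : Dist n U) : EReal :=
  sd T - ((n : ℝ) : EReal)

/-- Scaling set for distributions on all of `ℝⁿ`, defined via global rescaling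
`T_λ(φ) = T(φ_λ)` (no localization to a ball). -/
def sdSetG {n : ℕ} (T : Dist n univ) : Set ℝ :=
  {k | ∀ φ : TestFun n univ, ∀ Φ : ℝ → TestFun n univ,
      (∀ lam : ℝ, 0 < lam → lam < 1 → ((Φ lam : Pt n → ℝ) = scaleFun lam (φ : Pt n → ℝ))) →
      Tendsto (fun lam : ℝ => lam ^ k * T.toLin (Φ lam)) (𝓝[>] 0) (𝓝 0)}

noncomputable def sdG {n : ℕ} (T : Dist n univ) : EReal :=
  sInf {x : EReal | ∃ k ∈ sdSetG T, x = (k : EReal)}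

/-- Degree of divergence (global version, for distributions on all of `ℝⁿ`). -/
noncomputable def degDivG {n : ℕ} (T : Dist n univ) : EReal :=
  sdG T - ((n : ℝ) : EReal)

/-- Scaling degree of an `ℝ²`-valued distribution. -/
noncomputable def sdV {U : Set (Pt 2)} (v : Fin 2 → Dist 2 U) : EReal := ⨆ i, sd (v i)

/-- Degree of divergence of an `ℝ²`-valued distribution. -/
noncomputable def degDivV {U : Set (Pt 2)} (v : Fin 2 → Dist 2 U) : EReal :=
  sdV v - ((2 : ℝ) : EReal)

/-- Scaling degree of a matrix-valued distribution. -/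
noncomputable def sdM {U : Set (Pt 2)} (V : Fin 2 → Fin 2 → Dist 2 U) : EReal :=
  ⨆ i, ⨆ j, sd (V i j)

/-- Degree of divergence of a matrix-valued distribution. -/
noncomputable def degDivM {U : Set (Pt 2)} (V : Fin 2 → Fin 2 → Dist 2 U) : EReal :=
  sdM V - ((2 : ℝ) : EReal)

/-- `x ∈ ℝ ∪ {±∞}` is finite. -/
def EReal.IsFinite (x : EReal) : Prop := ∃ k : ℝ, x = (k : EReal)

/-- `T` is represented on the subset `V ⊆ U` by the smooth function `f`:
this expresses that `T|_V` is the smooth map `f`. -/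
def RepOn {n : ℕ} {U : Set (Pt n)} (T : Dist n U) (f : Pt n → ℝ) (V : Set (Pt n)) : Prop :=
  ContDiffOn ℝ ∞ f V ∧
  ∀ φ : TestFun n U, tsupport (φ : Pt n → ℝ) ⊆ V →
    T.toLin φ = ∫ x, f x * (φ : Pt n → ℝ) x

/-- The support of `T` is contained in the set `S`:  `T` vanishes on every test
function whose support does not meet `S`. -/
def SuppIn {n : ℕ} {U : Set (Pt n)} (T : Dist n U) (S : Set (Pt n)) : Prop :=
  ∀ φ : TestFun n U, tsupport (φ : Pt n → ℝ) ∩ S = ∅ → T.toLin φ = 0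

/-! ### Two-dimensional geometry -/

/-- The point of the circle of radius `ε` (centred at the origin) at angle `θ`. -/
noncomputable def circPt (ε θ : ℝ) : Pt 2 := ![ε * Real.cos θ, ε * Real.sin θ]

/-- Unit tangent to the (counter-clockwise) circle at angle `θ`. -/
noncomputable def tanVec (θ : ℝ) : Pt 2 := ![-Real.sin θ, Real.cos θ]

/-- Outward unit normal to the circle at angle `θ`. -/
noncomputable def norVec (θ : ℝ) : Pt 2 := ![Real.cos θ, Real.sin θ]

/-- The closed Euclidean disc of radius `ε` centred at the origin. -/
def eball (ε : ℝ) : Set (Pt 2) := {x | x 0 ^ 2 + x 1 ^ 2 ≤ ε ^ 2}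

/-- The circulation `∮_{∂B_ε} ⟨A₀, t⟩ dl` of a vector field around the circle `∂B_ε`. -/
noncomputable def circTan (A0 : Fin 2 → Pt 2 → ℝ) (ε : ℝ) : ℝ :=
  ∫ θ in (0:ℝ)..(2 * Real.pi),
    (A0 0 (circPt ε θ) * (-Real.sin θ) + A0 1 (circPt ε θ) * Real.cos θ) * ε

/-- The flux `∮_{∂B_ε} ⟨A₀, n⟩ dl` of a vector field through the circle `∂B_ε`. -/
noncomputable def circNor (A0 : Fin 2 → Pt 2 → ℝ) (ε : ℝ) : ℝ :=
  ∫ θ in (0:ℝ)..(2 * Real.pi),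
    (A0 0 (circPt ε θ) * Real.cos θ + A0 1 (circPt ε θ) * Real.sin θ) * ε

/-- `curl f = ∂₁f₂ − ∂₂f₁` of a smooth planar vector field. -/
noncomputable def curlFun (A0 : Fin 2 → Pt 2 → ℝ) : Pt 2 → ℝ :=
  fun x => pderivFun 0 (A0 1) x - pderivFun 1 (A0 0) x

/-- `div f = ∂₁f₁ + ∂₂f₂` of a smooth planar vector field. -/
noncomputable def divFun (A0 : Fin 2 → Pt 2 → ℝ) : Pt 2 → ℝ :=
  fun x => pderivFun 0 (A0 0) x + pderivFun 1 (A0 1) x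

/-- `curl curl V = ∂₁∂₁V₂₂ − ∂₁∂₂(V₁₂+V₂₁) + ∂₂∂₂V₁₁` of a smooth matrix field. -/
noncomputable def ccFun (E0 : Fin 2 → Fin 2 → Pt 2 → ℝ) : Pt 2 → ℝ := fun x =>
  pderivFun 0 (pderivFun 0 (E0 1 1)) x
    - pderivFun 0 (pderivFun 1 (fun y => E0 0 1 y + E0 1 0 y)) x
    + pderivFun 1 (pderivFun 1 (E0 0 0)) x

/-- The `i`-th component of the Cesàro loop integral
`∮_{∂B_ε} { E₀(y) + (y−x) × curl E₀(y) } dy` around the circle `∂B_ε`. -/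
noncomputable def cesaro (E0 : Fin 2 → Fin 2 → Pt 2 → ℝ) (x : Pt 2) (ε : ℝ) (i : Fin 2) : ℝ :=
  ∫ θ in (0:ℝ)..(2 * Real.pi),
    (∑ j : Fin 2, (E0 i j (circPt ε θ) +
        ∑ k : Fin 2, (circPt ε θ k - x k) *
          (pderivFun j (E0 i k) (circPt ε θ) - pderivFun k (E0 i j) (circPt ε θ)))
      * tanVec θ j) * ε

/-! ### Distributional operators, expressed through their action on test functions -/

/-- `∇u = v` for distributions: `vᵢ(φ) = −u(∂ᵢφ)`. -/
def IsGradOf {n : ℕ} {U : Set (Pt n)} (u : Dist n U) (v : Fin n → Dist n U) : Prop :=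
  ∀ (i : Fin n) (φ : TestFun n U), (v i).toLin φ = - u.toLin (pdT i φ)

/-- `Curl v = T` for a planar vector distribution `v`:
`T(ψ) = −v(e₃ × ∇ψ) = v₁(∂₂ψ) − v₂(∂₁ψ)`. -/
def CurlEq {U : Set (Pt 2)} (v : Fin 2 → Dist 2 U) (T : Dist 2 U) : Prop :=
  ∀ ψ : TestFun 2 U, T.toLin ψ = (v 0).toLin (pdT 1 ψ) - (v 1).toLin (pdT 0 ψ)

/-- `Curl v = 0` for a planar vector distribution. -/
def CurlZero {U : Set (Pt 2)} (v : Fin 2 → Dist 2 U) : Prop :=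
  ∀ ψ : TestFun 2 U, (v 0).toLin (pdT 1 ψ) - (v 1).toLin (pdT 0 ψ) = 0

/-- `Div v = T` for a planar vector distribution `v`: `T(ψ) = −v(∇ψ)`. -/
def DivEq {U : Set (Pt 2)} (v : Fin 2 → Dist 2 U) (T : Dist 2 U) : Prop :=
  ∀ ψ : TestFun 2 U,
    T.toLin ψ = -((v 0).toLin (pdT 0 ψ) + (v 1).toLin (pdT 1 ψ))

/-- The stress equilibrium equation `Div σ + B = 0` in `D'(U, ℝ²)`, where
`(Div σ)ᵢ(ψ) = −Σⱼ σᵢⱼ(∂ⱼψ)`. -/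
def DivPlusEqZero {U : Set (Pt 2)} (σ : Fin 2 → Fin 2 → Dist 2 U)
    (B : Fin 2 → Dist 2 U) : Prop :=
  ∀ (i : Fin 2) (ψ : TestFun 2 U),
    -((σ i 0).toLin (pdT 0 ψ) + (σ i 1).toLin (pdT 1 ψ)) + (B i).toLin ψ = 0

/-- The evaluation `(Curl Curl V)(ψ) = V(𝔸∇²ψ)` for a matrix distribution `V`. -/
noncomputable def ccEval {U : Set (Pt 2)} (V : Fin 2 → Fin 2 → Dist 2 U)
    (ψ : TestFun 2 U) : ℝ :=
  (V 0 0).toLin (pdT 1 (pdT 1 ψ)) - (V 0 1).toLin (pdT 0 (pdT 1 ψ))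
    - (V 1 0).toLin (pdT 1 (pdT 0 ψ)) + (V 1 1).toLin (pdT 0 (pdT 0 ψ))

/-- `Curl Curl V = T` in `D'(U)` for a matrix distribution `V`. -/
def CurlCurlEq {U : Set (Pt 2)} (V : Fin 2 → Fin 2 → Dist 2 U) (T : Dist 2 U) : Prop :=
  ∀ ψ : TestFun 2 U, ccEval V ψ = T.toLin ψ

/-- `Curl Curl V = 0` in `D'(U)` for a matrix distribution `V`. -/
def CurlCurlZero {U : Set (Pt 2)} (V : Fin 2 → Fin 2 → Dist 2 U) : Prop :=
  ∀ ψ : TestFun 2 U, ccEval V ψ = 0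

/-- `E = (1/2)(∇u + (∇u)ᵀ)` for distributions:
`Eᵢⱼ(φ) = −(1/2)(uᵢ(∂ⱼφ) + uⱼ(∂ᵢφ))`. -/
def IsSymGrad {U : Set (Pt 2)} (u : Fin 2 → Dist 2 U)
    (E : Fin 2 → Fin 2 → Dist 2 U) : Prop :=
  ∀ (i j : Fin 2) (φ : TestFun 2 U),
    (E i j).toLin φ = -(1/2 : ℝ) * ((u i).toLin (pdT j φ) + (u j).toLin (pdT i φ))

/-- The polynomial `(−1)^{a+b} x₁^a x₂^b / (a! b!)`, the local model of the test
function `w^α` for the multi-index `α = (a,b)`. -/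
noncomputable def polyA (a b : ℕ) : Pt 2 → ℝ :=
  fun x => (-1 : ℝ) ^ (a + b) * x 0 ^ a * x 1 ^ b / ((Nat.factorial a : ℝ) * (Nat.factorial b : ℝ))

/-!
Rescaling `φ ↦ φ_λ` shrinks the support of `φ` into any given neighbourhood of the origin as
`λ → 0⁺`, so the limits that define the scaling degree only involve values of `T` on test
functions supported near the origin, where `T₁` and `T₂` agree.
-/

open scoped Pointwise

theorem Dist.toLin_eq_of_restrict_eq {n : ℕ} {U W : Set (Pt n)} {T₁ T₂ : Dist n U}
    (hWU : W ⊆ U) (h : T₁.restrict hWU = T₂.restrict hWU) (ψ : TestFun n U)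
    (hψ : tsupport (ψ : Pt n → ℝ) ⊆ W) : T₁.toLin ψ = T₂.toLin ψ :=
  congrArg (fun T : Dist n W => T.toLin ⟨ψ, ψ.isTF.1, ψ.isTF.2.1, hψ⟩) h

theorem tsupport_scaleFun_subset_closedBall {n : ℕ} {f : Pt n → ℝ} {R lam : ℝ}
    (hR : tsupport f ⊆ closedBall 0 R) (hlam : 0 < lam) :
    tsupport (scaleFun lam f) ⊆ closedBall 0 (lam * R) := by
  refine closure_minimal ?_ isClosed_closedBall
  calc Function.support (scaleFun lam f)
      ⊆ Function.support (fun x => f (lam⁻¹ • x)) := Function.support_mul_subset_right _ _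
    _ = lam • Function.support f := support_comp_inv_smul₀ hlam.ne' f
    _ ⊆ lam • closedBall 0 R := Set.smul_set_mono (subset_closure.trans hR)
    _ = closedBall 0 (lam * R) := by
      rw [smul_closedBall' hlam.ne', smul_zero, Real.norm_of_nonneg hlam.le]

theorem eventually_tsupport_scaleFun_subset {n : ℕ} {f : Pt n → ℝ} (hf : HasCompactSupport f)
    {W : Set (Pt n)} (hW : W ∈ 𝓝 0) : ∀ᶠ lam in 𝓝[>] (0 : ℝ), tsupport (scaleFun lam f) ⊆ W := by
  obtain ⟨δ, hδ, hδW⟩ := Metric.mem_nhds_iff.mp hW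
  obtain ⟨R, hR⟩ := hf.isBounded.subset_closedBall 0
  have hlamR : Tendsto (fun lam : ℝ => lam * R) (𝓝[>] 0) (𝓝 0) :=
    ((continuous_mul_const R).tendsto' 0 0 (zero_mul R)).mono_left nhdsWithin_le_nhds
  filter_upwards [self_mem_nhdsWithin, hlamR.eventually_lt_const hδ] with lam hlam hlamδ
  exact (tsupport_scaleFun_subset_closedBall hR hlam).trans
    ((closedBall_subset_ball hlamδ).trans hδW)

theorem sdSetG_subset_of_eqOn_nhds {n : ℕ} {T₁ T₂ : Dist n univ} {W : Set (Pt n)}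
    (hW : W ∈ 𝓝 0)
    (heq : ∀ ψ : TestFun n univ, tsupport (ψ : Pt n → ℝ) ⊆ W → T₁.toLin ψ = T₂.toLin ψ) :
    sdSetG T₁ ⊆ sdSetG T₂ := by
  intro k hk φ Φ hΦ
  refine (hk φ Φ hΦ).congr' ?_
  filter_upwards [eventually_tsupport_scaleFun_subset φ.isTF.2.1 hW,
    Ioo_mem_nhdsGT one_pos] with lam hlamW ⟨hlam0, hlam1⟩
  rw [heq (Φ lam) (hΦ lam hlam0 hlam1 ▸ hlamW)]

theorem statement_0_general (n : ℕ) (T₁ T₂ : Dist n (univ : Set (Pt n)))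
    (h : ∃ W : Set (Pt n), IsOpen W ∧ (0 : Pt n) ∈ W ∧
      T₁.restrict (subset_univ W) = T₂.restrict (subset_univ W)) :
    degDivG T₁ = degDivG T₂ := by
  obtain ⟨W, hWopen, hW0, hWeq⟩ := h
  have heq := Dist.toLin_eq_of_restrict_eq (subset_univ W) hWeq
  have hset : sdSetG T₁ = sdSetG T₂ :=
    (sdSetG_subset_of_eqOn_nhds (hWopen.mem_nhds hW0) heq).antisymm
      (sdSetG_subset_of_eqOn_nhds (hWopen.mem_nhds hW0) fun ψ hψ => (heq ψ hψ).symm)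
  rw [degDivG, degDivG, sdG, sdG, hset]

/-- If two distributions on `ℝⁿ` agree on an open neighbourhood of the
origin, they have the same degree of divergence with respect to the origin. -/
theorem statement_0 (n : ℕ) (hn : 1 ≤ n) (T₁ T₂ : Dist n (univ : Set (Pt n)))
    (h : ∃ W : Set (Pt n), IsOpen W ∧ (0 : Pt n) ∈ W ∧
      T₁.restrict (subset_univ W) = T₂.restrict (subset_univ W)) :
    degDivG T₁ = degDivG T₂ :=
  statement_0_general n T₁ T₂ h

end Paper
end

section
/- Let Ω ⊂ ℝ² be a simply connected, bounded, open set containing the origin O. If E ∈ E(Ω,ℝ²) satisfies Curl E = 0 in D'(Ω), then there exists u ∈ E(Ω) such that ∇u = E. -/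
/-!
Common framework: distributions with point singularities on open subsets of ℝⁿ,
following the paper's setup (test functions, distributions, restriction, scaling
degree and degree of divergence, singular fields, distributional operators).
-/

set_option linter.unusedVariables false

open MeasureTheory Metric Filter Topology Set
open scoped ContDiff

namespace Paper

/-!
With `L_k f (x) = ∫₀¹ tᵏ f(t x) dt`, differentiating `t ↦ t^(k+1) f(t x)` gives the Euler identity
`f = (k + 1) L_k f + ∑ⱼ xⱼ L_{k+1}(∂ⱼ f)`, and `∂ᵢ L_k f = L_{k+1}(∂ᵢ f)`. A distribution supported
at the origin only sees germs at `0`, so after multiplying by a cutoff `χ ≡ 1` near `0` these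
identities can be fed to `v`. Put `u(φ) = -∑ⱼ vⱼ(χ xⱼ L_{n-1} φ)`. Since
`xⱼ L_{n-1}(∂ᵢ φ) = ∂ᵢ(xⱼ L_{n-2} φ) - δᵢⱼ L_{n-2} φ`, closedness `vⱼ ∘ ∂ᵢ = vᵢ ∘ ∂ⱼ` turns
`-u(∂ᵢ φ)` into `vᵢ(∑ⱼ ∂ⱼ(xⱼ L_{n-2} φ) - L_{n-2} φ) = vᵢ((n - 1) L_{n-2} φ + ∑ⱼ xⱼ L_{n-1}(∂ⱼ φ))`,
which is `vᵢ(φ)` by the Euler identity. Continuity of `u` holds because `L_k` commutes with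
derivatives up to a shift of `k` and does not increase sup norms.
-/

section RadialAverage

variable {E V : Type*} [NormedAddCommGroup E] [NormedSpace ℝ E]
  [NormedAddCommGroup V] [NormedSpace ℝ V]

noncomputable def radialAvg (k : ℕ) (f : E → V) (x : E) : V :=
  ∫ t in (0:ℝ)..1, t ^ k • f (t • x)

theorem norm_smul_le_of_mem_uIcc {t : ℝ} (ht : t ∈ uIcc (0:ℝ) 1) (x : E) : ‖t • x‖ ≤ ‖x‖ := by
  rw [uIcc_of_le zero_le_one] at ht
  rw [norm_smul, Real.norm_of_nonneg ht.1]
  exact mul_le_of_le_one_left (norm_nonneg x) ht.2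

theorem intervalIntegrable_radialAvg_integrand {f : E → V} (hf : Continuous f) (k : ℕ) (x : E) :
    IntervalIntegrable (fun t : ℝ => t ^ k • f (t • x)) volume 0 1 :=
  ((continuous_pow k).smul (hf.comp (continuous_id.smul continuous_const))).intervalIntegrable _ _

theorem radialAvg_sub [CompleteSpace V] {f g : E → V} (hf : Continuous f) (hg : Continuous g)
    (k : ℕ) (x : E) :
    radialAvg k (f - g) x = radialAvg k f x - radialAvg k g x := by
  simp only [radialAvg, Pi.sub_apply, smul_sub]
  exact intervalIntegral.integral_sub (intervalIntegrable_radialAvg_integrand hf k x)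
    (intervalIntegrable_radialAvg_integrand hg k x)

theorem radialAvg_add [CompleteSpace V] {f g : E → V} (hf : Continuous f) (hg : Continuous g)
    (k : ℕ) (x : E) :
    radialAvg k (f + g) x = radialAvg k f x + radialAvg k g x := by
  simp only [radialAvg, Pi.add_apply, smul_add]
  exact intervalIntegral.integral_add (intervalIntegrable_radialAvg_integrand hf k x)
    (intervalIntegrable_radialAvg_integrand hg k x)

theorem radialAvg_const_smul (f : E → V) (c : ℝ) (k : ℕ) (x : E) :
    radialAvg k (c • f) x = c • radialAvg k f x := by
  simp only [radialAvg, Pi.smul_apply, ← intervalIntegral.integral_smul]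
  exact intervalIntegral.integral_congr fun t _ => smul_comm _ _ _

theorem radialAvg_clm_comp [CompleteSpace V] {W : Type*} [NormedAddCommGroup W] [NormedSpace ℝ W]
    [CompleteSpace W]    (L : V →L[ℝ] W) {f : E → V} (hf : Continuous f) (k : ℕ) (x : E) :
    radialAvg k (fun y => L (f y)) x = L (radialAvg k f x) := by
  simp only [radialAvg, ← L.map_smul]
  exact L.intervalIntegral_comp_comm (intervalIntegrable_radialAvg_integrand hf k x)

theorem norm_radialAvg_le {f : E → V} {C : ℝ} (hC : ∀ y, ‖f y‖ ≤ C) (k : ℕ) (x : E) :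
    ‖radialAvg k f x‖ ≤ C := by
  have h := intervalIntegral.norm_integral_le_of_norm_le_const (a := 0) (b := 1)
    (f := fun t => t ^ k • f (t • x)) (C := C) fun t ht => by
      rw [uIoc_of_le zero_le_one] at ht
      rw [norm_smul, norm_pow, Real.norm_of_nonneg ht.1.le]
      exact (mul_le_of_le_one_left (norm_nonneg _) (pow_le_one₀ ht.1.le ht.2)).trans (hC _)
  simpa [radialAvg] using h

theorem Filter.EventuallyEq.radialAvg {f g : E → V} (h : f =ᶠ[𝓝 0] g) (k : ℕ) :
    radialAvg k f =ᶠ[𝓝 0] radialAvg k g := by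
  obtain ⟨ρ, hρ, hball⟩ := Metric.mem_nhds_iff.mp h
  filter_upwards [ball_mem_nhds (0 : E) hρ] with x hx
  refine intervalIntegral.integral_congr fun t ht => ?_
  have htx : t • x ∈ ball (0 : E) ρ := by
    rw [mem_ball_zero_iff] at hx ⊢
    exact (norm_smul_le_of_mem_uIcc ht x).trans_lt hx
  rw [show f (t • x) = g (t • x) from hball htx]

theorem hasFDerivAt_radialAvg [ProperSpace E] {f : E → V} (hf : ContDiff ℝ 1 f) (k : ℕ) (x₀ : E) :
    HasFDerivAt (radialAvg k f) (radialAvg (k + 1) (fderiv ℝ f) x₀) x₀ := by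
  have hDf := hf.continuous_fderiv one_ne_zero
  obtain ⟨M, hM⟩ := (isCompact_closedBall (0 : E) (‖x₀‖ + 1)).exists_bound_of_continuousOn
    hDf.continuousOn
  refine intervalIntegral.hasFDerivAt_integral_of_dominated_of_fderiv_le
    (F' := fun x t => t ^ (k + 1) • fderiv ℝ f (t • x)) (bound := fun _ => M)
    (ball_mem_nhds x₀ one_pos) (Eventually.of_forall fun x =>
      (intervalIntegrable_radialAvg_integrand hf.continuous k x).def'.aestronglyMeasurable)
    (intervalIntegrable_radialAvg_integrand hf.continuous k x₀)
    (intervalIntegrable_radialAvg_integrand hDf (k + 1) x₀).def'.aestronglyMeasurable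
    (Eventually.of_forall fun t ht x hx => ?_) intervalIntegrable_const
    (Eventually.of_forall fun t _ x _ => ?_)
  · have ht' := uIoc_subset_uIcc ht
    rw [uIcc_of_le zero_le_one] at ht'
    have htx : t • x ∈ closedBall (0 : E) (‖x₀‖ + 1) := by
      rw [mem_closedBall_zero_iff]
      refine (norm_smul_le_of_mem_uIcc (uIoc_subset_uIcc ht) x).trans ?_
      have := norm_le_norm_add_norm_sub' x x₀
      linarith [mem_ball_iff_norm.mp hx]
    rw [norm_smul, norm_pow, Real.norm_of_nonneg ht'.1]
    exact (mul_le_of_le_one_left (norm_nonneg _) (pow_le_one₀ ht'.1 ht'.2)).trans (hM _ htx)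
  · have hscale : HasFDerivAt (fun y : E => t • y) (t • ContinuousLinearMap.id ℝ E) x :=
      (hasFDerivAt_id x).const_smul t
    convert (((hf.differentiable one_ne_zero) (t • x)).hasFDerivAt.comp x hscale).const_smul
      (t ^ k) using 1
    · rfl
    · ext v
      simp [smul_smul, pow_succ]

theorem fderiv_radialAvg [ProperSpace E] {f : E → V} (hf : ContDiff ℝ 1 f) (k : ℕ) :
    fderiv ℝ (radialAvg k f) = radialAvg (k + 1) (fderiv ℝ f) :=
  funext fun x => (hasFDerivAt_radialAvg hf k x).fderiv

theorem iteratedFDeriv_radialAvg [CompleteSpace V] [ProperSpace E] {f : E → V} (hf : ContDiff ℝ ∞ f)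
    (k m : ℕ) :
    iteratedFDeriv ℝ m (radialAvg k f) = radialAvg (k + m) (iteratedFDeriv ℝ m f) := by
  induction m with
  | zero =>
    funext x
    exact (radialAvg_clm_comp
      (continuousMultilinearCurryFin0 ℝ E V).symm.toContinuousLinearEquiv.toContinuousLinearMap
      hf.continuous k x).symm
  | succ m ih =>
    funext x
    have hfm : ContDiff ℝ 1 (iteratedFDeriv ℝ m f) :=
      hf.iteratedFDeriv_right (by exact_mod_cast le_top)
    rw [iteratedFDeriv_succ_eq_comp_left, iteratedFDeriv_succ_eq_comp_left, Function.comp_apply,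
      ih, fderiv_radialAvg hfm, ← add_assoc]
    exact (radialAvg_clm_comp (continuousMultilinearCurryLeftEquiv ℝ (fun _ : Fin (m + 1) => E)
      V).symm.toContinuousLinearEquiv.toContinuousLinearMap (hfm.continuous_fderiv one_ne_zero)
      _ x).symm

theorem contDiff_radialAvg [CompleteSpace V] [ProperSpace E] {f : E → V} (hf : ContDiff ℝ ∞ f)
    (k : ℕ) :
    ContDiff ℝ ∞ (radialAvg k f) :=
  contDiff_of_differentiable_iteratedFDeriv fun m _ => by
    rw [iteratedFDeriv_radialAvg hf]
    exact fun x => (hasFDerivAt_radialAvg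
      (hf.iteratedFDeriv_right (by exact_mod_cast le_top)) _ x).differentiableAt

theorem add_one_smul_radialAvg_add_radialAvg_fderiv_apply [CompleteSpace V] {f : E → V}
    (hf : ContDiff ℝ 1 f) (k : ℕ) (x : E) :
    ((k : ℝ) + 1) • radialAvg k f x + radialAvg (k + 1) (fderiv ℝ f) x x = f x := by
  have hDf := hf.continuous_fderiv one_ne_zero
  have hderiv : ∀ t : ℝ, HasDerivAt (fun s : ℝ => s ^ (k + 1) • f (s • x))
      (((k : ℝ) + 1) • t ^ k • f (t • x) + t ^ (k + 1) • fderiv ℝ f (t • x) x) t := by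
    intro t
    have hpow : HasDerivAt (fun s : ℝ => s ^ (k + 1)) (((k : ℝ) + 1) * t ^ k) t := by
      simpa using hasDerivAt_pow (k + 1) t
    have hcomp : HasDerivAt (fun s : ℝ => f (s • x)) (fderiv ℝ f (t • x) x) t :=
      (hf.differentiable one_ne_zero (t • x)).hasFDerivAt.comp_hasDerivAt t
        (by simpa using (hasDerivAt_id t).smul_const x)
    convert hpow.fun_smul hcomp using 1
    rw [add_comm, mul_smul]
  have happly :
      radialAvg (k + 1) (fun y => fderiv ℝ f y x) x = radialAvg (k + 1) (fderiv ℝ f) x x :=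
    radialAvg_clm_comp (ContinuousLinearMap.apply ℝ V x) hDf (k + 1) x
  have hint₁ := intervalIntegrable_radialAvg_integrand hf.continuous k x
  have hint₂ := intervalIntegrable_radialAvg_integrand
    (hDf.clm_apply (continuous_const (y := x))) (k + 1) x
  have hftc := intervalIntegral.integral_eq_sub_of_hasDerivAt (fun t _ => hderiv t)
    ((hint₁.smul ((k : ℝ) + 1)).add hint₂)
  rw [intervalIntegral.integral_add (f := fun t => ((k : ℝ) + 1) • t ^ k • f (t • x))
    (hint₁.smul _) hint₂, intervalIntegral.integral_smul] at hftc
  rw [← happly]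
  simpa [radialAvg] using hftc

theorem TendstoUniformly.radialAvg {ι : Type*} {l : Filter ι} [CompleteSpace V] {gs : ι → E → V}
    {g : E → V} (hgs : ∀ i, Continuous (gs i)) (hg : Continuous g)
    (h : TendstoUniformly gs g l) (k : ℕ) :
    TendstoUniformly (fun i => radialAvg k (gs i)) (radialAvg k g) l := by
  rw [Metric.tendstoUniformly_iff] at h ⊢
  intro ε hε
  filter_upwards [h (ε / 2) (half_pos hε)] with i hi x
  rw [dist_eq_norm, ← radialAvg_sub hg (hgs i)]
  exact (norm_radialAvg_le (fun y => (dist_eq_norm _ _).symm.trans_le (hi y).le) k x).trans_lt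
    (half_lt_self hε)

end RadialAverage

section PartialDerivatives

variable {n : ℕ}

theorem Filter.EventuallyEq.pderivFun {f g : Pt n → ℝ} {x : Pt n} (h : f =ᶠ[𝓝 x] g) (i : Fin n) :
    Paper.pderivFun i f =ᶠ[𝓝 x] Paper.pderivFun i g :=
  (h.fderiv (𝕜 := ℝ)).mono fun y hy => by simp only [Paper.pderivFun, hy]

theorem pderivFun_mul {f g : Pt n → ℝ} (hf : ContDiff ℝ 1 f) (hg : ContDiff ℝ 1 g) (i : Fin n)
    (x : Pt n) :
    pderivFun i (fun y => f y * g y) x = pderivFun i f x * g x + f x * pderivFun i g x := by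
  simp only [pderivFun, fderiv_fun_mul (hf.differentiable one_ne_zero x)
    (hg.differentiable one_ne_zero x), add_apply, smul_apply, smul_eq_mul]
  ring

theorem pderivFun_apply_coord (i j : Fin n) (x : Pt n) :
    pderivFun i (fun y => y j) x = if i = j then 1 else 0 := by
  rw [pderivFun, (hasFDerivAt_apply j x).fderiv]
  simp [Pi.single_apply, eq_comm]

theorem pderivFun_radialAvg {f : Pt n → ℝ} (hf : ContDiff ℝ 1 f) (k : ℕ) (i : Fin n) :
    pderivFun i (radialAvg k f) = radialAvg (k + 1) (pderivFun i f) := by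
  funext x
  rw [pderivFun, fderiv_radialAvg hf]
  exact (radialAvg_clm_comp (ContinuousLinearMap.apply ℝ ℝ (Pi.single i 1))
    (hf.continuous_fderiv one_ne_zero) _ x).symm

theorem pderivFun_coord_mul_radialAvg {f : Pt n → ℝ} (hf : ContDiff ℝ ∞ f) (k : ℕ) (i j : Fin n)
    (x : Pt n) :
    pderivFun i (fun y => y j * radialAvg k f y) x
      = (if i = j then radialAvg k f x else 0) + x j * radialAvg (k + 1) (pderivFun i f) x := by
  rw [pderivFun_mul ((contDiff_apply ℝ ℝ j).of_le (by exact_mod_cast le_top))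
    ((contDiff_radialAvg hf k).of_le (by exact_mod_cast le_top)), pderivFun_apply_coord,
    pderivFun_radialAvg (hf.of_le (by exact_mod_cast le_top))]
  split_ifs <;> simp

theorem add_one_mul_radialAvg_add_sum_mul_pderivFun {f : Pt n → ℝ} (hf : ContDiff ℝ 1 f) (k : ℕ)
    (x : Pt n) :
    ((k : ℝ) + 1) * radialAvg k f x + ∑ j, x j * radialAvg (k + 1) (pderivFun j f) x = f x := by
  classical
  rw [← add_one_smul_radialAvg_add_radialAvg_fderiv_apply hf k x, smul_eq_mul]
  congr 1
  have hA : ∀ j, radialAvg (k + 1) (pderivFun j f) x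
      = radialAvg (k + 1) (fderiv ℝ f) x (Pi.single j 1) := fun j =>
    radialAvg_clm_comp (ContinuousLinearMap.apply ℝ ℝ (Pi.single j 1))
      (hf.continuous_fderiv one_ne_zero) _ x
  simp only [hA]
  generalize radialAvg (k + 1) (fderiv ℝ f) x = A
  conv_rhs => rw [pi_eq_sum_univ' x, map_sum]
  simp

end PartialDerivatives

theorem tendstoUniformly_iteratedFDeriv_mul {E ι : Type*} [NormedAddCommGroup E] [NormedSpace ℝ E]
    {l : Filter ι} {g : E → ℝ} (hg : ContDiff ℝ ∞ g) (hgc : HasCompactSupport g)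
    {fs : ι → E → ℝ} {f : E → ℝ} (hfs : ∀ i, ContDiff ℝ ∞ (fs i)) (hf : ContDiff ℝ ∞ f)
    (h : ∀ q : ℕ, TendstoUniformly (fun i => iteratedFDeriv ℝ q (fs i)) (iteratedFDeriv ℝ q f) l)
    (m : ℕ) :
    TendstoUniformly (fun i => iteratedFDeriv ℝ m (g * fs i)) (iteratedFDeriv ℝ m (g * f)) l := by
  have hbound : ∀ q : ℕ, ∃ C, 0 ≤ C ∧ ∀ x, ‖iteratedFDeriv ℝ q g x‖ ≤ C := fun q => by
    obtain ⟨C, hC⟩ := (hg.continuous_iteratedFDeriv (by exact_mod_cast le_top)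
      ).bounded_above_of_compact_support (hgc.iteratedFDeriv q)
    exact ⟨C, (norm_nonneg _).trans (hC 0), hC⟩
  choose C hC0 hC using hbound
  set B := ∑ q ∈ Finset.range (m + 1), (m.choose q : ℝ) * C q
  have hB : 0 ≤ B := Finset.sum_nonneg fun q _ => mul_nonneg (Nat.cast_nonneg _) (hC0 q)
  rw [Metric.tendstoUniformly_iff]
  intro ε hε
  have hδ : 0 < ε / (B + 1) := by positivity
  have hev : ∀ᶠ i in l, ∀ q ∈ Finset.range (m + 1), ∀ x,
      dist (iteratedFDeriv ℝ q f x) (iteratedFDeriv ℝ q (fs i) x) < ε / (B + 1) :=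
    (Finset.eventually_all _).2 fun q _ => Metric.tendstoUniformly_iff.mp (h q) _ hδ
  filter_upwards [hev] with i hi x
  have hsmooth : ∀ {u : E → ℝ}, ContDiff ℝ ∞ u → ContDiff ℝ m u :=
    fun hu => hu.of_le (by exact_mod_cast le_top)
  have hdiff : ∀ q ≤ m, ∀ y,
      ‖iteratedFDeriv ℝ q (f - fs i) y‖ ≤ ε / (B + 1) := fun q hq y => by
    rw [iteratedFDeriv_sub_apply (hf.contDiffAt.of_le (by exact_mod_cast le_top))
      ((hfs i).contDiffAt.of_le (by exact_mod_cast le_top)), ← dist_eq_norm]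
    exact (hi q (Finset.mem_range_succ_iff.mpr hq) y).le
  rw [dist_eq_norm, ← iteratedFDeriv_sub_apply (f := g * f) (g := g * fs i)
    (hsmooth (hg.mul hf)).contDiffAt (hsmooth (hg.mul (hfs i))).contDiffAt, ← mul_sub]
  calc ‖iteratedFDeriv ℝ m (g * (f - fs i)) x‖
      ≤ ∑ q ∈ Finset.range (m + 1), (m.choose q : ℝ) * ‖iteratedFDeriv ℝ q g x‖ *
          ‖iteratedFDeriv ℝ (m - q) (f - fs i) x‖ :=
        norm_iteratedFDeriv_mul_le (hsmooth hg) (hsmooth (hf.sub (hfs i))) x le_rfl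
    _ ≤ ∑ q ∈ Finset.range (m + 1), (m.choose q : ℝ) * C q * (ε / (B + 1)) := by
        gcongr with q
        · exact mul_nonneg (Nat.cast_nonneg _) (hC0 q)
        · exact hC q x
        · exact hdiff _ (Nat.sub_le m q) x
    _ = B * (ε / (B + 1)) := by rw [Finset.sum_mul]
    _ < ε := by
        rw [mul_div_assoc', div_lt_iff₀ (by positivity)]
        nlinarith

section PointSupported

variable {n : ℕ} {U : Set (Pt n)} {χ : Pt n → ℝ}

theorem IsTestFun.mul_contDiff (hχ : IsTestFun U χ) {h : Pt n → ℝ} (hh : ContDiff ℝ ∞ h) :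
    IsTestFun U (χ * h) :=
  ⟨hχ.1.mul hh, hχ.2.1.mul_right, tsupport_mul_subset_left.trans hχ.2.2⟩

noncomputable def cutoffTF (hχ : IsTestFun U χ) {h : Pt n → ℝ} (hh : ContDiff ℝ ∞ h) :
    TestFun n U :=
  ⟨χ * h, hχ.mul_contDiff hh⟩

theorem cutoffTF_eventuallyEq (hχ : IsTestFun U χ) (hχ₁ : χ =ᶠ[𝓝 0] 1) {h : Pt n → ℝ}
    (hh : ContDiff ℝ ∞ h) : (cutoffTF hχ hh : Pt n → ℝ) =ᶠ[𝓝 0] h := by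
  filter_upwards [hχ₁] with x hx
  simp [cutoffTF, hx]

theorem SuppIn.toLin_congr {T : Dist n U} (hT : SuppIn T {0}) {φ ψ : TestFun n U}
    (h : (φ : Pt n → ℝ) =ᶠ[𝓝 0] ψ) : T.toLin φ = T.toLin ψ := by
  rw [← sub_eq_zero, ← map_sub]
  refine hT _ (inter_singleton_eq_empty.mpr ?_)
  rw [notMem_tsupport_iff_eventuallyEq]
  filter_upwards [h] with x hx
  simp [hx]

noncomputable def radialHomotopy (hχ : IsTestFun U χ) (k : ℕ) (j : Fin n) :
    TestFun n U →ₗ[ℝ] TestFun n U where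
  toFun φ := cutoffTF (hχ.mul_contDiff (contDiff_apply ℝ ℝ j)) (contDiff_radialAvg φ.isTF.1 k)
  map_add' φ ψ := by
    ext x
    simp [cutoffTF, radialAvg_add φ.isTF.1.continuous ψ.isTF.1.continuous, mul_add]
  map_smul' c φ := by
    ext x
    simp only [cutoffTF, SetLike.val_smul, Pi.mul_apply, radialAvg_const_smul, smul_eq_mul,
      Real.ringHom_apply, Pi.smul_apply]
    ring

theorem TFConv.radialHomotopy (hχ : IsTestFun U χ) (k : ℕ) (j : Fin n) {φs : ℕ → TestFun n U}
    {ψ : TestFun n U} (h : TFConv φs ψ) :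
    TFConv (fun i => radialHomotopy hχ k j (φs i)) (radialHomotopy hχ k j ψ) := by
  refine ⟨⟨tsupport χ, hχ.2.1, hχ.2.2, fun i => ?_⟩, fun m => ?_⟩
  · exact tsupport_mul_subset_left.trans tsupport_mul_subset_left
  · have hg := hχ.mul_contDiff (contDiff_apply ℝ ℝ j)
    refine tendstoUniformly_iteratedFDeriv_mul hg.1 hg.2.1
      (fun i => contDiff_radialAvg (φs i).isTF.1 k) (contDiff_radialAvg ψ.isTF.1 k)
      (fun q => ?_) m
    simp only [iteratedFDeriv_radialAvg (φs _).isTF.1, iteratedFDeriv_radialAvg ψ.isTF.1]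
    exact TendstoUniformly.radialAvg
      (fun i => (φs i).isTF.1.continuous_iteratedFDeriv (by exact_mod_cast le_top))
      (ψ.isTF.1.continuous_iteratedFDeriv (by exact_mod_cast le_top)) (h.2 q) _

noncomputable def gradPotential (v : Fin n → Dist n U) (hχ : IsTestFun U χ) : Dist n U where
  toLin := -∑ j, (v j).toLin ∘ₗ radialHomotopy hχ (n - 1) j
  cont φs ψ h := by
    simp only [LinearMap.neg_apply, LinearMap.sum_apply, LinearMap.comp_apply]
    exact (tendsto_finsetSum _ fun j _ => (v j).cont _ _ (h.radialHomotopy hχ _ j)).neg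

variable {v : Fin n → Dist n U}

theorem suppIn_gradPotential (hv : ∀ j, SuppIn (v j) {0})
    (hχ : IsTestFun U χ) : SuppIn (gradPotential v hχ) {0} := by
  intro ψ hψ
  rw [inter_singleton_eq_empty, notMem_tsupport_iff_eventuallyEq] at hψ
  have hzero : ∀ j, (v j).toLin (radialHomotopy hχ (n - 1) j ψ) = 0 := fun j => by
    rw [(hv j).toLin_congr (ψ := 0), map_zero]
    filter_upwards [Filter.EventuallyEq.radialAvg hψ (n - 1)] with x hx
    simp only [radialHomotopy, cutoffTF, LinearMap.coe_mk, AddHom.coe_mk, Pi.mul_apply, hx]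
    simp [radialAvg]
  simp [gradPotential, hzero]

theorem radialHomotopy_eventuallyEq (hχ : IsTestFun U χ) (hχ₁ : χ =ᶠ[𝓝 0] 1) (k : ℕ) (j : Fin n)
    (φ : TestFun n U) :
    (radialHomotopy hχ k j φ : Pt n → ℝ) =ᶠ[𝓝 0] fun x => x j * radialAvg k φ x := by
  filter_upwards [hχ₁] with x hx
  simp [radialHomotopy, cutoffTF, hx]

theorem toLin_radialHomotopy_pdT (hv : ∀ j, SuppIn (v j) {0}) (hχ : IsTestFun U χ)
    (hχ₁ : χ =ᶠ[𝓝 0] 1) (hclosed : ∀ i j ψ, (v j).toLin (pdT i ψ) = (v i).toLin (pdT j ψ))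
    (k : ℕ) (φ : TestFun n U) (i j : Fin n) :
    (v j).toLin (radialHomotopy hχ (k + 1) j (pdT i φ))
      = (v i).toLin (cutoffTF hχ (contDiff_radialAvg φ.isTF.1 k))
        + (v i).toLin (radialHomotopy hχ (k + 1) j (pdT j φ))
        - if i = j then (v i).toLin (cutoffTF hχ (contDiff_radialAvg φ.isTF.1 k)) else 0 := by
  set a := cutoffTF hχ (contDiff_radialAvg φ.isTF.1 k)
  have ha : (a : Pt n → ℝ) =ᶠ[𝓝 0] radialAvg k φ := cutoffTF_eventuallyEq hχ hχ₁ _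
  let g := cutoffTF hχ ((contDiff_apply ℝ ℝ j).mul (contDiff_radialAvg φ.isTF.1 k))
  have hg : ∀ i, (pdT i g : Pt n → ℝ) =ᶠ[𝓝 0]
      ((if i = j then a else 0) + radialHomotopy hχ (k + 1) j (pdT i φ) : TestFun n U) :=
    fun i => by
      filter_upwards [Filter.EventuallyEq.pderivFun (cutoffTF_eventuallyEq hχ hχ₁ _) i, ha,
        radialHomotopy_eventuallyEq hχ hχ₁ (k + 1) j (pdT i φ)] with x hgx hax hbx
      rw [Submodule.coe_add, Pi.add_apply, hbx]
      simp only [pdT, g]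
      rw [hgx, pderivFun_coord_mul_radialAvg φ.isTF.1]
      split_ifs <;> simp [hax]
  have h₁ := (hv j).toLin_congr (hg i)
  have h₂ := (hv i).toLin_congr (hg j)
  rw [hclosed, map_add] at h₁
  rw [if_pos rfl, map_add] at h₂
  split_ifs at h₁ ⊢ with hij
  · subst hij
    linarith
  · rw [map_zero, zero_add] at h₁
    linarith

theorem isGradOf_gradPotential (hn : 2 ≤ n) (hv : ∀ j, SuppIn (v j) {0}) (hχ : IsTestFun U χ)
    (hχ₁ : χ =ᶠ[𝓝 0] 1) (hclosed : ∀ i j ψ, (v j).toLin (pdT i ψ) = (v i).toLin (pdT j ψ)) :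
    IsGradOf (gradPotential v hχ) v := by
  obtain ⟨k, rfl⟩ : ∃ k, n = k + 2 := ⟨n - 2, by omega⟩
  intro i φ
  set a := cutoffTF hχ (contDiff_radialAvg φ.isTF.1 k)
  set b := fun j => radialHomotopy hχ (k + 1) j (pdT j φ)
  have ha : (a : Pt (k + 2) → ℝ) =ᶠ[𝓝 0] radialAvg k φ := cutoffTF_eventuallyEq hχ hχ₁ _
  have hb : ∀ j, (b j : Pt (k + 2) → ℝ) =ᶠ[𝓝 0]
      fun x => x j * radialAvg (k + 1) (pderivFun j φ) x := fun j =>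
    radialHomotopy_eventuallyEq hχ hχ₁ (k + 1) j (pdT j φ)
  have heuler : (φ : Pt (k + 2) → ℝ) =ᶠ[𝓝 0] (((k : ℝ) + 1) • a + ∑ j, b j : TestFun _ U) := by
    filter_upwards [ha, eventually_all.2 hb] with x hax hbx
    simp only [Submodule.coe_add, Submodule.coe_smul, Submodule.coe_sum, Pi.add_apply,
      Pi.smul_apply, Finset.sum_apply, hax, hbx, smul_eq_mul]
    exact (add_one_mul_radialAvg_add_sum_mul_pderivFun
      (φ.isTF.1.of_le (by exact_mod_cast le_top)) k x).symm
  calc (v i).toLin φ = ((k : ℝ) + 1) * (v i).toLin a + ∑ j, (v i).toLin (b j) := by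
        rw [(hv i).toLin_congr heuler, map_add, map_smul, map_sum, smul_eq_mul]
    _ = ∑ j, (v j).toLin (radialHomotopy hχ (k + 1) j (pdT i φ)) := by
        simp only [toLin_radialHomotopy_pdT hv hχ hχ₁ hclosed, Finset.sum_sub_distrib,
          Finset.sum_add_distrib, Finset.sum_ite_eq, Finset.mem_univ, if_true,
          Finset.sum_const, Finset.card_univ, Fintype.card_fin, nsmul_eq_mul]
        push_cast
        ring
    _ = -(gradPotential v hχ).toLin (pdT i φ) := by
        simp [gradPotential]

end PointSupported

theorem exists_isTestFun_eventuallyEq_one {n : ℕ} {U : Set (Pt n)} (hU : IsOpen U)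
    (h0 : (0 : Pt n) ∈ U) : ∃ χ : Pt n → ℝ, IsTestFun U χ ∧ χ =ᶠ[𝓝 0] 1 := by
  obtain ⟨ε, hε, hball⟩ := Metric.isOpen_iff.mp hU 0 h0
  let bump : ContDiffBump (0 : Pt n) := ⟨ε / 4, ε / 2, by positivity, by linarith⟩
  refine ⟨bump, ⟨bump.contDiff, bump.hasCompactSupport, ?_⟩, bump.eventuallyEq_one⟩
  rw [bump.tsupport_eq]
  exact (closedBall_subset_ball (by simp [bump]; linarith)).trans hball

theorem CurlZero.pdT_comm {U : Set (Pt 2)} {v : Fin 2 → Dist 2 U} (hv : CurlZero v) (i j : Fin 2)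
    (ψ : TestFun 2 U) : (v j).toLin (pdT i ψ) = (v i).toLin (pdT j ψ) := by
  have := hv ψ
  fin_cases i <;> fin_cases j <;> simp <;> linarith

theorem statement_5_general (Ω : Set (Pt 2)) (hopen : IsOpen Ω)
    (h0 : (0 : Pt 2) ∈ Ω)
    (E : Fin 2 → Dist 2 Ω) (hE : ∀ i, SuppIn (E i) {0})
    (hcurl : CurlZero E) :
    ∃ u : Dist 2 Ω, SuppIn u {0} ∧ IsGradOf u E := by
  obtain ⟨χ, hχ, hχ₁⟩ := exists_isTestFun_eventuallyEq_one hopen h0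
  exact ⟨gradPotential E hχ, suppIn_gradPotential hE hχ,
    isGradOf_gradPotential le_rfl hE hχ hχ₁ hcurl.pdT_comm⟩

/-- A curl-free element of `E(Ω,ℝ²)` on a simply connected domain is
the gradient of an element of `E(Ω)`. -/
theorem statement_5 (Ω : Set (Pt 2)) (hopen : IsOpen Ω) (hbdd : Bornology.IsBounded Ω)
    (hsc : SimplyConnectedSpace Ω) (h0 : (0 : Pt 2) ∈ Ω)
    (E : Fin 2 → Dist 2 Ω) (hE : ∀ i, SuppIn (E i) {0})
    (hcurl : CurlZero E) :
    ∃ u : Dist 2 Ω, SuppIn u {0} ∧ IsGradOf u E :=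
  statement_5_general Ω hopen h0 E hE hcurl

end Paper
end
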